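/- arXiv:1910.05744 — 3 statements merged into one kernel-verified Lean document; each statement's English description precedes it below -/
import Mathlib

section
/- Let Z be a finite nonempty type and let p, p' : Z → ℝ satisfy p z > 0 and p' z > 0 for every z. Set P = Σ_z p z and P' = Σ_z p' z. If Σ_z (p' z / P') · log (p z) ≥ Σ_z (p' z / P') · log (p' z), then log P ≥ log P'. -/
/-- Single-observation EM monotonicity lemma. -/
theorem em_monotonicity_single_observation
    {Z : Type*} [Fintype Z] [Nonempty Z]
    (p p' : Z → ℝ) (hp : ∀ z, 0 < p z) (hp' : ∀ z, 0 < p' z)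
    (hQ : ∑ z, (p' z / ∑ z', p' z') * Real.log (p z) ≥
          ∑ z, (p' z / ∑ z', p' z') * Real.log (p' z)) :
    Real.log (∑ z, p z) ≥ Real.log (∑ z, p' z) := by
  set P' : ℝ := ∑ z', p' z' with hP'
  have hP'pos : 0 < P' := Finset.sum_pos (fun z _ => hp' z) Finset.univ_nonempty
  set q : Z → ℝ := fun z => p' z / P' with hq
  have hqpos : ∀ z, 0 < q z := fun z => div_pos (hp' z) hP'pos
  have hqsum : ∑ z, q z = 1 := by
    simp only [hq, ← Finset.sum_div]
    exact div_self hP'pos.ne'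
  -- Jensen: ∑ q z * log (p z / q z) ≤ log (∑ q z * (p z / q z)) = log (∑ p z)
  have hjensen :
      (∑ z, q z • Real.log (p z / q z)) ≤ Real.log (∑ z, q z • (p z / q z)) := by
    refine (StrictConcaveOn.concaveOn strictConcaveOn_log_Ioi).le_map_sum
      (fun z _ => (hqpos z).le) hqsum (fun z _ => ?_)
    exact Set.mem_Ioi.mpr (div_pos (hp z) (hqpos z))
  have hsum_eq : (∑ z, q z • (p z / q z)) = ∑ z, p z := by
    apply Finset.sum_congr rfl
    intro z _
    rw [smul_eq_mul, mul_div_cancel₀ _ (hqpos z).ne']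
  rw [hsum_eq] at hjensen
  have hsplit : ∀ z, q z • Real.log (p z / q z)
      = q z * Real.log (p z) - q z * Real.log (q z) := by
    intro z
    rw [smul_eq_mul, Real.log_div (hp z).ne' (hqpos z).ne', mul_sub]
  have hsplit' : ∀ z, q z * Real.log (p' z / q z)
      = q z * Real.log (p' z) - q z * Real.log (q z) := by
    intro z
    rw [Real.log_div (hp' z).ne' (hqpos z).ne', mul_sub]
  have hlow : Real.log P' ≤ ∑ z, q z • Real.log (p z / q z) := by
    have h1 : ∑ z, q z * Real.log (p' z / q z)
        ≤ ∑ z, q z • Real.log (p z / q z) := by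
      simp only [hsplit, hsplit']
      rw [Finset.sum_sub_distrib, Finset.sum_sub_distrib]
      exact sub_le_sub_right hQ _
    have h2 : ∑ z, q z * Real.log (p' z / q z) = Real.log P' := by
      have : ∀ z, p' z / q z = P' := by
        intro z
        simp only [hq]
        rw [div_div_eq_mul_div, div_eq_iff (hp' z).ne', mul_comm]
      simp only [this, ← Finset.sum_mul, hqsum, one_mul]
    linarith
  linarith
end

section
/- Let Θ be a nonempty compact topological space, let X and Z be finite nonempty types, let p : Θ → X → Z → ℝ be such that p θ x z > 0 for all θ, x, z and θ ↦ p θ x z is continuous for each x, z, and let w : X → ℝ satisfy w x ≥ 0 and Σ_x w x = 1. Define L(θ) = Σ_x w x · log (Σ_z p θ x z) and Q(θ; θ') = Σ_x w x · Σ_z (p θ' x z / Σ_{z'} p θ' x z') · log (p θ x z). If (θ_n) is any sequence in Θ satisfying Q(θ_{n+1}; θ_n) ≥ Q(θ_n; θ_n) for every n, then the sequence L(θ_n) converges to a real limit. -/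
open Finset Real

lemma gibbs_aux {Z : Type*} [Fintype Z] [Nonempty Z] (P Q : Z → ℝ)
    (hP : ∀ z, 0 < P z) (hQ : ∀ z, 0 < Q z) :
    ∑ z, (P z / ∑ z', P z') * Real.log (Q z)
      - ∑ z, (P z / ∑ z', P z') * Real.log (P z)
    ≤ Real.log (∑ z, Q z) - Real.log (∑ z, P z) := by
  set S := ∑ z', P z' with hS
  set S' := ∑ z, Q z with hS'
  have hSpos : 0 < S := Finset.sum_pos (fun z _ => hP z) Finset.univ_nonempty
  have hS'pos : 0 < S' := Finset.sum_pos (fun z _ => hQ z) Finset.univ_nonempty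
  have key : ∀ z, (P z / S) * (Real.log (Q z) - Real.log (P z))
      ≤ Q z / S' - P z / S + (P z / S) * (Real.log S' - Real.log S) := by
    intro z
    have h1 : Real.log (Q z) - Real.log (P z)
        = Real.log ((Q z * S) / (P z * S')) + (Real.log S' - Real.log S) := by
      rw [Real.log_div (mul_pos (hQ z) hSpos).ne' (mul_pos (hP z) hS'pos).ne',
        Real.log_mul (ne_of_gt (hQ z)) (ne_of_gt hSpos),
        Real.log_mul (ne_of_gt (hP z)) (ne_of_gt hS'pos)]
      ring
    have h2 : Real.log ((Q z * S) / (P z * S')) ≤ (Q z * S) / (P z * S') - 1 :=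
      Real.log_le_sub_one_of_pos (div_pos (mul_pos (hQ z) hSpos) (mul_pos (hP z) hS'pos))
    have hPz := (hP z).ne'
    have hS0 := hSpos.ne'
    have hS'0 := hS'pos.ne'
    have h3 : (P z / S) * ((Q z * S) / (P z * S') - 1) = Q z / S' - P z / S := by
      field_simp
    have hr : (0:ℝ) ≤ P z / S := div_nonneg (hP z).le hSpos.le
    have h4 := mul_le_mul_of_nonneg_left h2 hr
    rw [h1, mul_add]
    linarith [h3]
  calc ∑ z, (P z / S) * Real.log (Q z) - ∑ z, (P z / S) * Real.log (P z)
      = ∑ z, (P z / S) * (Real.log (Q z) - Real.log (P z)) := by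
        rw [← Finset.sum_sub_distrib]; exact Finset.sum_congr rfl (fun z _ => by ring)
    _ ≤ ∑ z, (Q z / S' - P z / S + (P z / S) * (Real.log S' - Real.log S)) :=
        Finset.sum_le_sum (fun z _ => key z)
    _ = Real.log S' - Real.log S := by
        have h5 : ∑ z, P z / S = 1 := by
          rw [← Finset.sum_div, ← hS, div_self hSpos.ne']
        have h6 : ∑ z, Q z / S' = 1 := by
          rw [← Finset.sum_div, ← hS', div_self hS'pos.ne']
        rw [Finset.sum_add_distrib, Finset.sum_sub_distrib, ← Finset.sum_mul, h5, h6]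
        ring

/-- Proposition 1: convergence of EM learning with a compact parameter space on
which the model probabilities depend continuously. -/
theorem em_converges
    {Θ : Type*} [TopologicalSpace Θ] [CompactSpace Θ] [Nonempty Θ]
    {X Z : Type*} [Fintype X] [Nonempty X] [Fintype Z] [Nonempty Z]
    (p : Θ → X → Z → ℝ) (hp : ∀ θ x z, 0 < p θ x z)
    (hcont : ∀ x z, Continuous fun θ => p θ x z)
    (w : X → ℝ) (hw : ∀ x, 0 ≤ w x) (hw1 : ∑ x, w x = 1)
    (θs : ℕ → Θ)
    (hstep : ∀ n,
      ∑ x, w x * ∑ z, (p (θs n) x z / ∑ z', p (θs n) x z') *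
          Real.log (p (θs (n + 1)) x z) ≥
      ∑ x, w x * ∑ z, (p (θs n) x z / ∑ z', p (θs n) x z') *
          Real.log (p (θs n) x z)) :
    ∃ l : ℝ, Filter.Tendsto
      (fun n => ∑ x, w x * Real.log (∑ z, p (θs n) x z))
      Filter.atTop (nhds l) := by
  set L : Θ → ℝ := fun θ => ∑ x, w x * Real.log (∑ z, p θ x z) with hL
  set f : ℕ → ℝ := fun n => L (θs n) with hf
  -- monotonicity
  have hmono : Monotone f := by
    apply monotone_nat_of_le_succ
    intro n
    have hx : ∀ x, w x * (∑ z, (p (θs n) x z / ∑ z', p (θs n) x z') *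
          Real.log (p (θs (n+1)) x z)
        - ∑ z, (p (θs n) x z / ∑ z', p (θs n) x z') * Real.log (p (θs n) x z))
        ≤ w x * (Real.log (∑ z, p (θs (n+1)) x z) - Real.log (∑ z, p (θs n) x z)) := by
      intro x
      exact mul_le_mul_of_nonneg_left
        (gibbs_aux (fun z => p (θs n) x z) (fun z => p (θs (n+1)) x z)
          (fun z => hp _ _ _) (fun z => hp _ _ _)) (hw x)
    have hsum := Finset.sum_le_sum (fun x (_ : x ∈ Finset.univ) => hx x)
    have hstep' := hstep n
    simp only [hf, hL]
    simp only [mul_sub, Finset.sum_sub_distrib] at hsum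
    linarith
  -- boundedness
  have hLcont : Continuous L := by
    apply continuous_finset_sum
    intro x _
    exact Continuous.mul continuous_const
      ((continuous_finset_sum _ (fun z _ => hcont x z)).log
        (fun θ => ne_of_gt (Finset.sum_pos (fun z _ => hp θ x z) Finset.univ_nonempty)))
  obtain ⟨θmax, _, hθmax⟩ := isCompact_univ.exists_isMaxOn Set.univ_nonempty
    hLcont.continuousOn
  have hbdd : BddAbove (Set.range f) := by
    refine ⟨L θmax, ?_⟩
    rintro y ⟨n, rfl⟩
    exact hθmax (Set.mem_univ (θs n))
  exact ⟨⨆ n, f n, tendsto_atTop_ciSup hmono hbdd⟩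
end

section
/- Let a, b be natural numbers, let m_a, m_b : (Fin a → ℝ) → (Fin b → ℝ) be differentiable at a point u, and define F : (Fin a → ℝ) × (Fin b → ℝ) → (Fin a → ℝ) × (Fin b → ℝ) by F (u, v) = (u, fun i ↦ m_a u i * v i + m_b u i). Then F is differentiable at every point (u, v) and the determinant of its derivative at (u, v) equals ∏_i m_a u i. -/
/-- A coupling layer is differentiable and the determinant of its Jacobian is
the product of the entries of the scale `m_a u`. -/
theorem coupling_layer_det_fderiv
    {a b : ℕ} (ma mb : (Fin a → ℝ) → (Fin b → ℝ)) (u : Fin a → ℝ)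
    (hma : DifferentiableAt ℝ ma u) (hmb : DifferentiableAt ℝ mb u) :
    ∀ v : Fin b → ℝ,
      DifferentiableAt ℝ
        (fun p : (Fin a → ℝ) × (Fin b → ℝ) =>
          ((p.1, fun i => ma p.1 i * p.2 i + mb p.1 i) :
            (Fin a → ℝ) × (Fin b → ℝ))) (u, v) ∧
      (fderiv ℝ
        (fun p : (Fin a → ℝ) × (Fin b → ℝ) =>
          ((p.1, fun i => ma p.1 i * p.2 i + mb p.1 i) :
            (Fin a → ℝ) × (Fin b → ℝ))) (u, v)).det =
        ∏ i, ma u i := by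
  intro v
  set A := fderiv ℝ ma u with hA
  set B := fderiv ℝ mb u with hB
  -- the candidate derivative
  set fst : ((Fin a → ℝ) × (Fin b → ℝ)) →L[ℝ] (Fin a → ℝ) :=
    ContinuousLinearMap.fst ℝ (Fin a → ℝ) (Fin b → ℝ) with hfst
  set snd : ((Fin a → ℝ) × (Fin b → ℝ)) →L[ℝ] (Fin b → ℝ) :=
    ContinuousLinearMap.snd ℝ (Fin a → ℝ) (Fin b → ℝ) with hsnd
  set Lc : ∀ _ : Fin b, ((Fin a → ℝ) × (Fin b → ℝ)) →L[ℝ] ℝ :=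
    fun i =>
      (v i) • ((ContinuousLinearMap.proj i).comp (A.comp fst))
        + (ma u i) • ((ContinuousLinearMap.proj i).comp snd)
        + ((ContinuousLinearMap.proj i).comp (B.comp fst)) with hLc
  set L : ((Fin a → ℝ) × (Fin b → ℝ)) →L[ℝ] ((Fin a → ℝ) × (Fin b → ℝ)) :=
    fst.prod (ContinuousLinearMap.pi Lc) with hL
  have hcoord : ∀ i, HasFDerivAt
      (fun p : (Fin a → ℝ) × (Fin b → ℝ) => ma p.1 i * p.2 i + mb p.1 i)
      (Lc i) (u, v) := by
    intro i
    have h1 : HasFDerivAt (fun p : (Fin a → ℝ) × (Fin b → ℝ) => ma p.1 i)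
        ((ContinuousLinearMap.proj i).comp (A.comp fst)) (u, v) := by
      have := (hasFDerivAt_apply i (ma u)).comp (u, v)
        (hma.hasFDerivAt.comp (u, v) (hasFDerivAt_fst (𝕜 := ℝ) (p := (u, v))))
      exact this
    have h2 : HasFDerivAt (fun p : (Fin a → ℝ) × (Fin b → ℝ) => p.2 i)
        ((ContinuousLinearMap.proj i).comp snd) (u, v) := by
      exact (hasFDerivAt_apply i v).comp (u, v) (hasFDerivAt_snd (𝕜 := ℝ) (p := (u, v)))
    have h3 : HasFDerivAt (fun p : (Fin a → ℝ) × (Fin b → ℝ) => mb p.1 i)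
        ((ContinuousLinearMap.proj i).comp (B.comp fst)) (u, v) := by
      have := (hasFDerivAt_apply i (mb u)).comp (u, v)
        (hmb.hasFDerivAt.comp (u, v) (hasFDerivAt_fst (𝕜 := ℝ) (p := (u, v))))
      exact this
    refine ((h1.mul h2).add h3).congr_fderiv ?_
    simp [hLc]
    abel
  have hF : HasFDerivAt
      (fun p : (Fin a → ℝ) × (Fin b → ℝ) =>
        ((p.1, fun i => ma p.1 i * p.2 i + mb p.1 i) :
          (Fin a → ℝ) × (Fin b → ℝ))) L (u, v) := by
    refine (hasFDerivAt_fst).prodMk ?_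
    exact hasFDerivAt_pi.2 hcoord
  refine ⟨hF.differentiableAt, ?_⟩
  rw [hF.fderiv]
  -- compute the determinant via the product of the standard bases
  classical
  set e : Module.Basis (Fin a ⊕ Fin b) ℝ ((Fin a → ℝ) × (Fin b → ℝ)) :=
    (Pi.basisFun ℝ (Fin a)).prod (Pi.basisFun ℝ (Fin b)) with he
  have hdet : L.det = LinearMap.det (L : ((Fin a → ℝ) × (Fin b → ℝ)) →ₗ[ℝ]
      ((Fin a → ℝ) × (Fin b → ℝ))) := rfl
  rw [hdet, ← LinearMap.det_toMatrix e]
  have hmat : LinearMap.toMatrix e e (L : ((Fin a → ℝ) × (Fin b → ℝ)) →ₗ[ℝ]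
      ((Fin a → ℝ) × (Fin b → ℝ))) =
      Matrix.fromBlocks 1 0
        (Matrix.of fun i j => v i * A (Pi.single j 1) i + B (Pi.single j 1) i)
        (Matrix.diagonal (ma u)) := by
    ext i j
    rcases i with i | i <;> rcases j with j | j <;>
      simp [LinearMap.toMatrix_apply, he, hL, hLc, hfst, hsnd,
        Matrix.one_apply, Matrix.diagonal_apply, Pi.single_apply, eq_comm]
  rw [hmat, Matrix.det_fromBlocks_zero₁₂, Matrix.det_one, Matrix.det_diagonal, one_mul]
end
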